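/- arXiv:2411.19065 — 7 statements merged into one kernel-verified Lean document; each statement's English description precedes it below -/
import Mathlib

section
/- Let q be a prime power and f a nonzero polynomial in F_q[x_1,...,x_l] whose monomials all have exponents with each coordinate less than q. Then the number of zeros of f in F_q^l is at most the number of points a in {0,...,q-1}^l such that x^a is not divisible by the leading monomial of f (with respect to a fixed monomial order); equivalently, if the leading monomial of f is x^c with c in {0,...,q-1}^l, then |Z(f)| ≤ q^l − ∏_{i=1}^l (q − c_i). -/
/-! Let `q = |F|` and `c = deg f`. The polynomials `g` whose exponents satisfy `b i < q - c i`
span a space of dimension `∏ i, (q - c i)`, and `g ↦ g * f`, read as a function on the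
non-zeros of `f`, is injective on it. Indeed `g * f` has leading monomial `deg g + c`, which
lies in the cube `[0, q)ˡ`, and a polynomial with leading monomial in that cube cannot vanish
on all of `Fˡ`: dividing it by the field equations `X i ^ q - X i` leaves a reduced remainder
that vanishes everywhere, hence is zero, while no quotient term reaches the leading monomial.
So `f` has at least `∏ i, (q - c i)` non-zeros. -/

open scoped MonomialOrder

namespace MonomialOrder

open MvPolynomial

variable {σ R : Type*} [CommRing R] [Nontrivial R] (m : MonomialOrder σ)

theorem degree_X_pow (n : ℕ) (i : σ) :
    m.degree (X i ^ n : MvPolynomial σ R) = Finsupp.single i n := by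
  classical
  rw [X_pow_eq_monomial, degree_monomial, if_neg one_ne_zero]

theorem degree_X_lt_degree_X_pow {n : ℕ} (hn : 1 < n) (i : σ) :
    m.degree (X i : MvPolynomial σ R) ≺[m] m.degree (X i ^ n : MvPolynomial σ R) := by
  rw [degree_X, degree_X_pow]
  exact m.toSyn_strictMono <|
    Finsupp.single_mono.strictMono_of_injective (Finsupp.single_injective i) hn

theorem degree_X_pow_sub_X {n : ℕ} (hn : 1 < n) (i : σ) :
    m.degree (X i ^ n - X i : MvPolynomial σ R) = Finsupp.single i n := by
  rw [degree_sub_of_lt (m.degree_X_lt_degree_X_pow hn i), degree_X_pow]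

theorem monic_X_pow_sub_X {n : ℕ} (hn : 1 < n) (i : σ) :
    m.Monic (X i ^ n - X i : MvPolynomial σ R) := by
  rw [Monic, leadingCoeff_sub_of_lt (m.degree_X_lt_degree_X_pow hn i)]
  exact monic_X.pow

end MonomialOrder

namespace MvPolynomial

open MonomialOrder Finset

variable {σ F : Type*} [Field F] [Fintype F]

theorem eval_X_pow_card_sub_X (x : σ → F) (i : σ) :
    eval x (X i ^ Fintype.card F - X i) = 0 := by
  simp [FiniteField.pow_card]

theorem exists_eval_ne_zero_of_degree_lt_card [Finite σ] (m : MonomialOrder σ)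
    {p : MvPolynomial σ F} (hp : p ≠ 0) (hdeg : ∀ i, m.degree p i < Fintype.card F) :
    ∃ x : σ → F, eval x p ≠ 0 := by
  by_contra! hvanish
  set q := Fintype.card F
  have hq : 1 < q := Fintype.one_lt_card
  obtain ⟨g, r, hpgr, hdeg_le, hr⟩ := m.div (b := fun i ↦ X i ^ q - X i)
    (fun i ↦ by rw [(m.monic_X_pow_sub_X hq i).leadingCoeff_eq_one]; exact isUnit_one) p
  have hr0 : r = 0 := by
    refine eq_zero_of_eval_zero_at_prod_finset r (fun _ ↦ univ) (fun i ↦ ?_) fun x _ ↦ ?_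
    · rw [card_univ, degreeOf_lt_iff (by omega)]
      intro c hc
      simpa [m.degree_X_pow_sub_X hq] using hr c hc i
    · have := hvanish x
      rwa [hpgr, map_add, Finsupp.linearCombination_apply, map_finsuppSum, Finsupp.sum,
        sum_eq_zero fun i _ ↦ by rw [smul_eq_mul, map_mul, eval_X_pow_card_sub_X, mul_zero],
        zero_add] at this
  refine m.coeff_degree_ne_zero_iff.mpr hp <| (congrArg (coeff _) hpgr).trans ?_
  rw [hr0, add_zero, Finsupp.linearCombination_apply, Finsupp.sum, coeff_sum]
  refine sum_eq_zero fun i hi ↦ ?_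
  rw [smul_eq_mul, mul_comm]
  have hdeg_ne : m.degree ((X i ^ q - X i) * g i) ≠ m.degree p := fun heq ↦ by
    have := hdeg i
    rw [← heq, degree_mul (m.monic_X_pow_sub_X hq i).ne_zero (Finsupp.mem_support_iff.mp hi),
      m.degree_X_pow_sub_X hq, Finsupp.add_apply, Finsupp.single_eq_same] at this
    omega
  exact m.coeff_eq_zero_of_lt ((hdeg_le i).lt_of_ne (m.toSyn.injective.ne hdeg_ne))

theorem prod_card_sub_degree_le_card_eval_ne_zero [Fintype σ] [DecidableEq σ] [DecidableEq F]
    (m : MonomialOrder σ) {f : MvPolynomial σ F} (hf : f ≠ 0) :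
    ∏ i, (Fintype.card F - m.degree f i) ≤ #{x : σ → F | eval x f ≠ 0} := by
  set q := Fintype.card F
  set box : Finset (σ →₀ ℕ) := (Fintype.piFinset fun i ↦ range (q - m.degree f i)).map
    Finsupp.equivFunOnFinite.symm.toEmbedding
  have mem_box (d : σ →₀ ℕ) : d ∈ box ↔ ∀ i, d i < q - m.degree f i := by simp [box]
  let L : restrictSupport F (box : Set (σ →₀ ℕ)) →ₗ[F] ({x // eval x f ≠ 0} → F) :=
    LinearMap.funLeft F F Subtype.val ∘ₗ evalₗ F σ ∘ₗ LinearMap.mulRight F f ∘ₗ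
      (restrictSupport F _).subtype
  have hL : Function.Injective L := by
    rw [← LinearMap.ker_eq_bot, LinearMap.ker_eq_bot']
    intro g hLg
    by_contra hg0
    replace hg0 : g.1 ≠ 0 := fun h ↦ hg0 (Subtype.ext h)
    obtain ⟨x, hx⟩ := exists_eval_ne_zero_of_degree_lt_card m (mul_ne_zero hg0 hf) fun i ↦ by
      have := (mem_box _).mp ((mem_restrictSupport_iff F).mp g.2 (m.degree_mem_support hg0)) i
      rw [degree_mul hg0 hf, Finsupp.add_apply]
      omega
    exact hx (congrFun hLg ⟨x, right_ne_zero_of_mul (by simpa using hx)⟩)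
  calc ∏ i, (q - m.degree f i) = #box := by simp [box, Fintype.card_piFinset]
    _ = Module.finrank F (restrictSupport F (box : Set (σ →₀ ℕ))) := by
      rw [Module.finrank_eq_card_basis (basisRestrictSupport F _)]
      simp
    _ ≤ Module.finrank F ({x // eval x f ≠ 0} → F) := LinearMap.finrank_le_finrank_of_injective hL
    _ = #{x : σ → F | eval x f ≠ 0} := by
      rw [Module.finrank_fintype_fun_eq_card, Fintype.card_subtype]

end MvPolynomial

open MvPolynomial in
theorem footprint_bound_general (q l : ℕ) (F : Type*) [Field F] [Fintype F] [DecidableEq F]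
    (hq : Fintype.card F = q)
    (f : MvPolynomial (Fin l) F)
    (m : MonomialOrder (Fin l)) (c : Fin l →₀ ℕ)
    (hc : c ∈ f.support) (hmax : ∀ d ∈ f.support, d ≼[m] c) :
    (Finset.univ.filter fun P : Fin l → F => MvPolynomial.eval P f = 0).card
      ≤ q ^ l - ∏ i, (q - c i) := by
  subst hq
  have hf : f ≠ 0 := by rintro rfl; simp at hc
  have hdeg : m.degree f = c :=
    m.toSyn.injective (le_antisymm (m.degree_le_iff.mpr hmax) (m.le_degree hc))
  have hnonzeros := hdeg ▸ prod_card_sub_degree_le_card_eval_ne_zero m hf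
  simp only [ne_eq] at hnonzeros
  have hsplit := Finset.card_filter_add_card_filter_not
    (s := Finset.univ) fun P : Fin l → F ↦ eval P f = 0
  rw [Finset.card_univ, Fintype.card_fun, Fintype.card_fin] at hsplit
  omega

/-- Footprint bound: the number of zeros of a nonzero polynomial `f` over `F_q`,
all of whose exponents have coordinates `< q`, is at most
`q^l - ∏ (q - c i)` where `x^c` is the leading monomial of `f` w.r.t. a monomial order. -/
theorem footprint_bound (q l : ℕ) (F : Type*) [Field F] [Fintype F] [DecidableEq F]
    (hq : Fintype.card F = q)
    (f : MvPolynomial (Fin l) F) (hf : f ≠ 0)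
    (hsupp : ∀ d ∈ f.support, ∀ i, d i < q)
    (m : MonomialOrder (Fin l)) (c : Fin l →₀ ℕ)
    (hc : c ∈ f.support) (hmax : ∀ d ∈ f.support, d ≼[m] c) :
    (Finset.univ.filter fun P : Fin l → F => MvPolynomial.eval P f = 0).card
      ≤ q ^ l - ∏ i, (q - c i) :=
  footprint_bound_general q l F hq f m c hc hmax
end

section
/- Let q ∈ N and D ⊆ {a ∈ N^l : a_i < q/2 for all i}. Then min over pairs (a,a') ∈ D×D of ∏_{i=1}^l (q − a_i − a'_i) ≥ F if and only if for every a ∈ D, ∏_{i=1}^l (q − 2a_i) ≥ F. -/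
lemma fb_key (q x y : ℕ) (hx : 2 * x < q) (hy : 2 * y < q) :
    (q - 2 * x) * (q - 2 * y) ≤ (q - x - y) ^ 2 := by
  have hsum : (q - 2 * x) + (q - 2 * y) = 2 * (q - x - y) := by omega
  have amgm : ∀ u v : ℕ, 4 * (u * v) ≤ (u + v) ^ 2 := by
    intro u v
    zify
    nlinarith [sq_nonneg ((u : ℤ) - v)]
  have h4 : 4 * ((q - 2 * x) * (q - 2 * y)) ≤ 4 * (q - x - y) ^ 2 := by
    calc 4 * ((q - 2 * x) * (q - 2 * y)) ≤ ((q - 2 * x) + (q - 2 * y)) ^ 2 := amgm _ _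
      _ = (2 * (q - x - y)) ^ 2 := by rw [hsum]
      _ = 4 * (q - x - y) ^ 2 := by ring
  omega

/-- For `D ⊆ {a ∈ ℕ^l : 2 a i < q}`, the footprint of the Minkowski sum `D + D` is at least
`F` if and only if `∏ (q - 2 a i) ≥ F` for every `a ∈ D`. -/
theorem fb_double_iff (q F l : ℕ) (hF : 1 ≤ F) (D : Set (Fin l → ℕ))
    (hD : ∀ a ∈ D, ∀ i, 2 * a i < q) :
    (∀ a ∈ D, ∀ a' ∈ D, F ≤ ∏ i, (q - a i - a' i)) ↔
      (∀ a ∈ D, F ≤ ∏ i, (q - 2 * a i)) := by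
  constructor
  · intro h a ha
    have heq : ∀ i, q - a i - a i = q - 2 * a i := fun i => by omega
    simpa [heq] using h a ha a ha
  · intro h a ha a' ha'
    set P := ∏ i, (q - a i - a' i) with hP
    have hsq : F * F ≤ P * P := by
      calc F * F ≤ (∏ i, (q - 2 * a i)) * (∏ i, (q - 2 * a' i)) :=
            Nat.mul_le_mul (h a ha) (h a' ha')
        _ = ∏ i, (q - 2 * a i) * (q - 2 * a' i) := (Finset.prod_mul_distrib).symm
        _ ≤ ∏ i, (q - a i - a' i) ^ 2 :=
            Finset.prod_le_prod (fun i _ => Nat.zero_le _)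
              (fun i _ => fb_key q (a i) (a' i) (hD a ha i) (hD a' ha' i))
        _ = P * P := by
            rw [hP, ← Finset.prod_mul_distrib]
            exact Finset.prod_congr rfl fun i _ => by ring
    by_contra hlt
    push_neg at hlt
    exact absurd hsq (not_le.mpr (Nat.mul_lt_mul'' hlt hlt))
end

section
/- Let D_A, D_B' ⊆ {0,...,q-1}^l, let m_i := 1 + max_{a,a' ∈ D_A} |a_i − a'_i|, and let D_B := {(m_1 b_1, ..., m_l b_l) : b ∈ D_B'}. If for every i, max_{(a,b) ∈ D_A × D_B} (a_i + b_i) < q, then the Minkowski sum D_A + D_B has exactly |D_A|·|D_B| elements, i.e., the map (a,b) ↦ a + b is injective on D_A × D_B. -/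
open scoped Pointwise

/-- Expansion of `D_B'` by the star product with `m`, where `m i - 1` is the maximal
coordinatewise distance within `D_A`: if all sums stay below `q`, the Minkowski sum
`D_A + D_B` has exactly `|D_A|·|D_B|` elements. -/
theorem expand_DB (q l : ℕ) (DA DB' : Finset (Fin l → ℕ))
    (hDA : DA.Nonempty) (hDB' : DB'.Nonempty)
    (hboxA : ∀ a ∈ DA, ∀ i, a i < q) (hboxB : ∀ b ∈ DB', ∀ i, b i < q)
    (m : Fin l → ℕ)
    (hm : ∀ i, m i = 1 + (DA ×ˢ DA).sup fun p => max (p.1 i - p.2 i) (p.2 i - p.1 i))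
    (DB : Finset (Fin l → ℕ)) (hDB : DB = DB'.image fun b i => m i * b i)
    (hsum : ∀ a ∈ DA, ∀ b ∈ DB, ∀ i, a i + b i < q) :
    (DA + DB).card = DA.card * DB.card := by
  rw [Finset.card_add_iff]
  rintro ⟨a, B⟩ hp ⟨a', B'⟩ hp' heq
  simp only [Set.mem_prod, Finset.mem_coe] at hp hp'
  obtain ⟨ha, hB⟩ := hp
  obtain ⟨ha', hB'⟩ := hp'
  subst hDB
  simp only [Finset.mem_image] at hB hB'
  obtain ⟨b, hb, rfl⟩ := hB
  obtain ⟨b', hb', rfl⟩ := hB'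
  -- coordinatewise equalities
  have key : ∀ i, a i = a' i ∧ b i = b' i := by
    intro i
    have h1 : a i - a' i < m i ∧ a' i - a i < m i := by
      have h := Finset.le_sup (f := fun p : (Fin l → ℕ) × (Fin l → ℕ) =>
        max (p.1 i - p.2 i) (p.2 i - p.1 i)) (Finset.mk_mem_product ha ha')
      dsimp at h
      rw [hm i] at *
      omega
    have hcoord : a i + m i * b i = a' i + m i * b' i := by
      have := congrFun heq i
      simpa using this
    have hbb : b i = b' i := by
      rcases lt_trichotomy (b i) (b' i) with h | h | h
      · have : m i * (b i + 1) ≤ m i * b' i := Nat.mul_le_mul_left _ h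
        rw [Nat.mul_add, Nat.mul_one] at this
        omega
      · exact h
      · have : m i * (b' i + 1) ≤ m i * b i := Nat.mul_le_mul_left _ h
        rw [Nat.mul_add, Nat.mul_one] at this
        omega
    refine ⟨?_, hbb⟩
    rw [hbb] at hcoord
    omega
  have ha_eq : a = a' := funext fun i => (key i).1
  have hb_eq : (fun i => m i * b i) = fun i => m i * b' i :=
    funext fun i => by rw [(key i).2]
  exact Prod.ext ha_eq hb_eq
end

section
/- Let q = 2 and suppose D_A, D_B ⊆ {0,1}^l and d ∈ {0,1}^l satisfy: there are exactly m = |D_A| = |D_B| pairs (a_i, b_i) ∈ D_A × D_B with d = (a_i + b_i)_2 (reduced sum), with a_i pairwise distinct and b_i pairwise distinct. Then FB(D_A +_2 D_B) = 2^{l − |supp(D_A +_2 D_B)|}, where supp(S) is the set of coordinates in which some element of S is nonzero. In particular, if supp(D_A +_2 D_B) = {1,...,l}, then FB(D_A +_2 D_B) = 1. -/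
/-- Reduction `(a)_2 := a` if `a < 2`, and `(a mod 2) + 1` if `2 ≤ a < 4`. -/
def red2 (a : ℕ) : ℕ := if a < 2 then a else a % 2 + 1

lemma red2_max (x y : ℕ) (hx : x < 2) (hy : y < 2) : red2 (x + y) = max x y := by
  unfold red2; split <;> omega

/-- Impossibility of nontrivial multivariate matdot codes over `F_2`: for any matdot
solution `D_A, D_B ⊆ {0,1}^l` with target exponent `d`, the footprint of `D_A +_2 D_B`
equals `2^(l - |supp(D_A +_2 D_B)|)`; in particular it is `1` when the support is all of
`{1,…,l}`. -/
theorem no_matdot_over_F2 (l m : ℕ) (hm : 1 ≤ m)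
    (DA DB : Finset (Fin l → ℕ)) (d : Fin l → ℕ)
    (hboxA : ∀ a ∈ DA, ∀ i, a i < 2) (hboxB : ∀ b ∈ DB, ∀ i, b i < 2)
    (hd : ∀ i, d i < 2)
    (hcardA : DA.card = m) (hcardB : DB.card = m)
    (hpairs : ((DA ×ˢ DB).filter fun p => (fun i => red2 (p.1 i + p.2 i)) = d).card = m)
    (hfst : Set.InjOn (Prod.fst : (Fin l → ℕ) × (Fin l → ℕ) → (Fin l → ℕ))
      ((DA ×ˢ DB).filter fun p => (fun i => red2 (p.1 i + p.2 i)) = d))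
    (hsnd : Set.InjOn (Prod.snd : (Fin l → ℕ) × (Fin l → ℕ) → (Fin l → ℕ))
      ((DA ×ˢ DB).filter fun p => (fun i => red2 (p.1 i + p.2 i)) = d))
    (S : Finset (Fin l → ℕ))
    (hS : S = (DA ×ˢ DB).image fun p i => red2 (p.1 i + p.2 i))
    (supp : Finset (Fin l))
    (hsupp : supp = Finset.univ.filter fun i => ∃ c ∈ S, c i ≠ 0) :
    ((∀ c ∈ S, 2 ^ (l - supp.card) ≤ ∏ i, (2 - c i)) ∧
      ∃ c ∈ S, ∏ i, (2 - c i) = 2 ^ (l - supp.card)) ∧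
    (supp = Finset.univ →
      ((∀ c ∈ S, 1 ≤ ∏ i, (2 - c i)) ∧ ∃ c ∈ S, ∏ i, (2 - c i) = 1)) := by
  set F := (DA ×ˢ DB).filter (fun p => (fun i => red2 (p.1 i + p.2 i)) = d) with hF
  have hFA : F.image Prod.fst = DA := by
    apply Finset.eq_of_subset_of_card_le
    · intro a ha
      obtain ⟨p, hp, rfl⟩ := Finset.mem_image.mp ha
      exact (Finset.mem_product.mp (Finset.mem_filter.mp hp).1).1
    · rw [Finset.card_image_of_injOn hfst, hpairs, hcardA]
  have hFB : F.image Prod.snd = DB := by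
    apply Finset.eq_of_subset_of_card_le
    · intro b hb
      obtain ⟨p, hp, rfl⟩ := Finset.mem_image.mp hb
      exact (Finset.mem_product.mp (Finset.mem_filter.mp hp).1).2
    · rw [Finset.card_image_of_injOn hsnd, hpairs, hcardB]
  have key : ∀ p ∈ F, ∀ i, p.1 i ≤ d i ∧ p.2 i ≤ d i := by
    intro p hp i
    obtain ⟨hpm, hpd⟩ := Finset.mem_filter.mp hp
    obtain ⟨ha, hb⟩ := Finset.mem_product.mp hpm
    have hdi : red2 (p.1 i + p.2 i) = d i := congrFun hpd i
    rw [red2_max _ _ (hboxA _ ha i) (hboxB _ hb i)] at hdi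
    omega
  have haled : ∀ a ∈ DA, ∀ i, a i ≤ d i := by
    intro a ha i
    rw [← hFA] at ha
    obtain ⟨p, hp, rfl⟩ := Finset.mem_image.mp ha
    exact (key p hp i).1
  have hbled : ∀ b ∈ DB, ∀ i, b i ≤ d i := by
    intro b hb i
    rw [← hFB] at hb
    obtain ⟨p, hp, rfl⟩ := Finset.mem_image.mp hb
    exact (key p hp i).2
  have hFne : F.Nonempty := Finset.card_pos.mp (by rw [hpairs]; omega)
  obtain ⟨p0, hp0⟩ := hFne
  have hdS : d ∈ S := by
    rw [hS]
    exact Finset.mem_image.mpr ⟨p0, (Finset.mem_filter.mp hp0).1,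
      (Finset.mem_filter.mp hp0).2⟩
  have hcle : ∀ c ∈ S, ∀ i, c i ≤ d i := by
    intro c hc i
    rw [hS] at hc
    obtain ⟨p, hp, rfl⟩ := Finset.mem_image.mp hc
    obtain ⟨ha, hb⟩ := Finset.mem_product.mp hp
    show red2 (p.1 i + p.2 i) ≤ d i
    rw [red2_max _ _ (hboxA _ ha i) (hboxB _ hb i)]
    exact max_le (haled _ ha i) (hbled _ hb i)
  have hsupp2 : supp = Finset.univ.filter fun i => d i ≠ 0 := by
    rw [hsupp]; ext i
    simp only [Finset.mem_filter, Finset.mem_univ, true_and]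
    constructor
    · rintro ⟨c, hc, hne⟩
      have := hcle c hc i
      omega
    · intro h
      exact ⟨d, hdS, h⟩
  have hcard : supp.card + (Finset.univ.filter fun i => d i = 0).card = l := by
    have h := Finset.card_filter_add_card_filter_not
      (s := (Finset.univ : Finset (Fin l))) (p := fun i => d i = 0)
    rw [Finset.card_univ, Fintype.card_fin] at h
    rw [hsupp2]
    simp only [ne_eq]
    omega
  have hprodd : ∏ i, (2 - d i) = 2 ^ (l - supp.card) := by
    have heq : ∀ i ∈ Finset.univ, (2 - d i) = if d i = 0 then 2 else 1 := by
      intro i _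
      have := hd i
      split <;> omega
    rw [Finset.prod_congr rfl heq, Finset.prod_ite, Finset.prod_const,
      Finset.prod_const, one_pow, mul_one]
    congr 1
    omega
  have hmin : ∀ c ∈ S, 2 ^ (l - supp.card) ≤ ∏ i, (2 - c i) := by
    intro c hc
    rw [← hprodd]
    exact Finset.prod_le_prod' fun i _ => Nat.sub_le_sub_left (hcle c hc i) 2
  refine ⟨⟨hmin, d, hdS, hprodd⟩, ?_⟩
  intro hu
  have hl : supp.card = l := by rw [hu, Finset.card_univ, Fintype.card_fin]
  have h0 : 2 ^ (l - supp.card) = 1 := by rw [hl, Nat.sub_self, pow_zero]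
  exact ⟨fun c hc => h0 ▸ hmin c hc, d, hdS, by rw [hprodd, h0]⟩
end

section
/- Let F ∈ N and d ∈ N^l with 2 d_i < q for all i. Define D := {a ∈ N^l : 2 a_i < q for all i, ∏_{i=1}^l (q − 2a_i) ≥ F, and ∏_{i=1}^l (q − 2(d_i − a_i)) ≥ F} (where implicitly a_i ≤ d_i). Then: (1) a ∈ D if and only if d − a ∈ D; and (2) min over (a,a') ∈ D × D of ∏_{i=1}^l (q − a_i − a'_i) ≥ F. -/
/-- Half-hyperbolic matdot construction: for `d` with `2 d i < q`, the set
`D = {a : a ≤ d, ∏ (q - 2 a i) ≥ F, ∏ (q - 2 (d i - a i)) ≥ F}` is symmetric under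
`a ↦ d - a`, and every pairwise sum has footprint at least `F`. -/
theorem half_hyperbolic (q F l : ℕ) (d : Fin l → ℕ) (hd : ∀ i, 2 * d i < q)
    (D : Set (Fin l → ℕ))
    (hD : D = {a : Fin l → ℕ | (∀ i, a i ≤ d i) ∧
      F ≤ ∏ i, (q - 2 * a i) ∧ F ≤ ∏ i, (q - 2 * (d i - a i))}) :
    (∀ a : Fin l → ℕ, (∀ i, a i ≤ d i) → (a ∈ D ↔ (fun i => d i - a i) ∈ D)) ∧
    (∀ a ∈ D, ∀ a' ∈ D, F ≤ ∏ i, (q - a i - a' i)) := by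
  subst hD
  constructor
  · intro a ha
    simp only [Set.mem_setOf_eq]
    constructor
    · rintro ⟨h1, h2, h3⟩
      refine ⟨fun i => Nat.sub_le _ _, h3, ?_⟩
      have : ∀ i, d i - (d i - a i) = a i := fun i => Nat.sub_sub_self (ha i)
      simpa [this] using h2
    · rintro ⟨h1, h2, h3⟩
      have heq : ∀ i, d i - (d i - a i) = a i := fun i => Nat.sub_sub_self (ha i)
      refine ⟨ha, ?_, h2⟩
      simpa [heq] using h3
  · rintro a ⟨ha, hFa, -⟩ a' ⟨ha', hFa', -⟩
    have key : ∀ i, (q - 2 * a i) * (q - 2 * a' i) ≤ (q - a i - a' i) ^ 2 := by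
      intro i
      have A := hd i; have B := ha i; have C := ha' i
      have h1 : 2 * a i ≤ q := by omega
      have h2 : 2 * a' i ≤ q := by omega
      have h3 : a i + a' i ≤ q := by have A := hd i; have B := ha i; have C := ha' i; omega
      zify [h1, h2, h3, Nat.sub_sub]
      nlinarith [sq_nonneg ((a i : ℤ) - a' i)]
    have hprod : (∏ i, (q - 2 * a i)) * (∏ i, (q - 2 * a' i)) ≤ (∏ i, (q - a i - a' i)) ^ 2 := by
      rw [← Finset.prod_mul_distrib, ← Finset.prod_pow]
      exact Finset.prod_le_prod (fun i _ => Nat.zero_le _) (fun i _ => key i)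
    have hF2 : F ^ 2 ≤ (∏ i, (q - a i - a' i)) ^ 2 := by
      calc F ^ 2 = F * F := sq F
        _ ≤ (∏ i, (q - 2 * a i)) * (∏ i, (q - 2 * a' i)) := Nat.mul_le_mul hFa hFa'
        _ ≤ _ := hprod
    exact (Nat.pow_le_pow_iff_left (by norm_num)).mp hF2
end

section
/- Suppose D_A = D_B ⊆ {a ∈ N^l : a_i < q} and d ∈ N^l form a matdot solution with D_A + D_A contained in {0,...,q-1}^l (no wraparound), meaning there are exactly m = |D_A| pairs (a_i,b_i) ∈ D_A × D_A with a_i + b_i = d, a_i distinct, b_i distinct. Let F := min_{(a,a') ∈ D_A×D_A} ∏_i (q − a_i − a'_i). Then the set D' := {a ∈ N^l : 2a_i < q, ∏_i (q − 2a_i) ≥ F, ∏_i (q − 2(d_i − a_i)) ≥ F} satisfies D_A ⊆ D', hence |D_A| ≤ |D'|, and min_{(a,a')∈D'×D'} ∏_i (q − a_i − a'_i) ≥ F. -/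
/-- Optimality of the half-hyperbolic construction among matdot solutions with
`D_A = D_B` and no wraparound: any such solution is contained in the half-hyperbolic set
`D'` with the same footprint `F`, and `D'` again has all pairwise sums of footprint `≥ F`. -/
theorem matdot_equals_optimal (q l : ℕ) (DA : Finset (Fin l → ℕ)) (d : Fin l → ℕ)
    (hne : DA.Nonempty)
    (hbox : ∀ a ∈ DA, ∀ i, a i < q)
    (hnowrap : ∀ a ∈ DA, ∀ a' ∈ DA, ∀ i, a i + a' i < q)
    (hpairs : ((DA ×ˢ DA).filter fun p => p.1 + p.2 = d).card = DA.card)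
    (hfst : Set.InjOn (Prod.fst : (Fin l → ℕ) × (Fin l → ℕ) → (Fin l → ℕ))
      ((DA ×ˢ DA).filter fun p => p.1 + p.2 = d))
    (hsnd : Set.InjOn (Prod.snd : (Fin l → ℕ) × (Fin l → ℕ) → (Fin l → ℕ))
      ((DA ×ˢ DA).filter fun p => p.1 + p.2 = d))
    (F : ℕ)
    (hFlb : ∀ a ∈ DA, ∀ a' ∈ DA, F ≤ ∏ i, (q - a i - a' i))
    (hFmin : ∃ a ∈ DA, ∃ a' ∈ DA, ∏ i, (q - a i - a' i) = F)
    (D' : Finset (Fin l → ℕ))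
    (hD' : D' = (Fintype.piFinset fun _ : Fin l => Finset.range q).filter
      fun a => (∀ i, 2 * a i < q) ∧ (F : ℤ) ≤ ∏ i, ((q : ℤ) - 2 * a i) ∧
        (F : ℤ) ≤ ∏ i, ((q : ℤ) - 2 * d i + 2 * a i)) :
    DA ⊆ D' ∧ DA.card ≤ D'.card ∧
      ∀ a ∈ D', ∀ a' ∈ D', (F : ℤ) ≤ ∏ i, ((q : ℤ) - a i - a' i) := by
  -- Step A: every a ∈ DA has a partner b ∈ DA with a + b = d
  have hpartner : ∀ a ∈ DA, ∃ b ∈ DA, ∀ i, a i + b i = d i := by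
    intro a ha
    have himg : ((DA ×ˢ DA).filter fun p => p.1 + p.2 = d).image Prod.fst = DA := by
      apply Finset.eq_of_subset_of_card_le
      · intro x hx
        obtain ⟨p, hp, rfl⟩ := Finset.mem_image.mp hx
        exact (Finset.mem_product.mp (Finset.mem_filter.mp hp).1).1
      · rw [Finset.card_image_of_injOn hfst, hpairs]
    have : a ∈ ((DA ×ˢ DA).filter fun p => p.1 + p.2 = d).image Prod.fst := by
      rw [himg]; exact ha
    obtain ⟨p, hp, hpa⟩ := Finset.mem_image.mp this
    rw [Finset.mem_filter, Finset.mem_product] at hp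
    refine ⟨p.2, hp.1.2, fun i => ?_⟩
    have := congrFun hp.2 i
    simpa [hpa] using this
  -- membership of DA in D'
  have hmem : ∀ a ∈ DA, a ∈ D' := by
    intro a ha
    obtain ⟨b, hb, hab⟩ := hpartner a ha
    have h2a : ∀ i, 2 * a i < q := fun i => by have := hnowrap a ha a ha i; omega
    have h2b : ∀ i, 2 * b i < q := fun i => by have := hnowrap b hb b hb i; omega
    rw [hD', Finset.mem_filter]
    refine ⟨?_, h2a, ?_, ?_⟩
    · exact Fintype.mem_piFinset.mpr fun i => Finset.mem_range.mpr (hbox a ha i)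
    · have h := hFlb a ha a ha
      have hcast : ((∏ i, (q - a i - a i) : ℕ) : ℤ) = ∏ i, ((q : ℤ) - 2 * a i) := by
        rw [Nat.cast_prod]
        exact Finset.prod_congr rfl fun i _ => by have := h2a i; push_cast; omega
      calc (F : ℤ) ≤ ((∏ i, (q - a i - a i) : ℕ) : ℤ) := by exact_mod_cast h
        _ = _ := hcast
    · have h := hFlb b hb b hb
      have hcast : ((∏ i, (q - b i - b i) : ℕ) : ℤ) = ∏ i, ((q : ℤ) - 2 * d i + 2 * a i) := by
        rw [Nat.cast_prod]
        refine Finset.prod_congr rfl fun i _ => ?_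
        have h1 := h2b i
        have h2 := hab i
        push_cast
        omega
      calc (F : ℤ) ≤ ((∏ i, (q - b i - b i) : ℕ) : ℤ) := by exact_mod_cast h
        _ = _ := hcast
  refine ⟨hmem, Finset.card_le_card hmem, ?_⟩
  -- Step C: convexity argument
  intro a ha a' ha'
  rw [hD', Finset.mem_filter] at ha ha'
  obtain ⟨-, h1, h2, -⟩ := ha
  obtain ⟨-, h1', h2', -⟩ := ha'
  have hF0 : (0:ℤ) ≤ F := Int.natCast_nonneg F
  set x : Fin l → ℤ := fun i => (q : ℤ) - 2 * a i with hx
  set y : Fin l → ℤ := fun i => (q : ℤ) - 2 * a' i with hy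
  have hxpos : ∀ i, 0 < x i := fun i => by have := h1 i; simp only [hx]; omega
  have hypos : ∀ i, 0 < y i := fun i => by have := h1' i; simp only [hy]; omega
  have hspos : ∀ i, 0 < (q : ℤ) - a i - a' i := fun i => by
    have := h1 i; have := h1' i; omega
  have hprod1 : ∏ i, (x i * y i) ≤ ∏ i, ((q : ℤ) - a i - a' i) ^ 2 := by
    refine Finset.prod_le_prod (fun i _ => mul_nonneg (hxpos i).le (hypos i).le)
      (fun i _ => ?_)
    have hxy : x i + y i = 2 * ((q : ℤ) - a i - a' i) := by simp only [hx, hy]; ring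
    nlinarith [sq_nonneg (x i - y i)]
  rw [Finset.prod_mul_distrib] at hprod1
  have hsq : ∏ i, ((q : ℤ) - a i - a' i) ^ 2 = (∏ i, ((q : ℤ) - a i - a' i)) ^ 2 := by
    rw [Finset.prod_pow]
  rw [hsq] at hprod1
  have hFF : (F : ℤ) * F ≤ (∏ i, x i) * (∏ i, y i) :=
    mul_le_mul h2 h2' hF0 (le_trans hF0 h2)
  have hs0 : 0 ≤ ∏ i, ((q : ℤ) - a i - a' i) :=
    Finset.prod_nonneg fun i _ => (hspos i).le
  nlinarith [hprod1, hFF, hs0, hF0]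
end

section
/- Let m ∈ N^l with 1 ≤ m_i, define q_i := q − m_i + 1, and for F ∈ N, l ≥ 1 define D_B(F,l) := {(m_1 b_1, ..., m_l b_l) ∈ {0,...,q-1}^l : ∏_{i=1}^l (q_i − m_i b_i) ≥ F}. Then |D_B(F,1)| = max{0, ⌊(q_1 − F)/m_1⌋ + 1}, and for l > 1, |D_B(F,l)| = Σ_{b=0}^{⌊(q_l − 1)/m_l⌋} |D_B(⌈F / (q_l − m_l b)⌉, l−1)|, where the (l−1)-dimensional set is defined with parameters (m_1,...,m_{l−1}). -/
open Finset

/-- The set `D_B(F,l) = {(m_1 b_1, …, m_l b_l) ∈ {0,…,q-1}^l : ∏ (q_i - m_i b_i) ≥ F}`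
where `q_i = q - m_i + 1` (coordinates of `m` indexed by `0,…,l-1`). -/
def DBset (q : ℕ) (m : ℕ → ℕ) (F l : ℕ) : Finset (Fin l → ℕ) :=
  ((Fintype.piFinset fun _ : Fin l => Finset.range q).filter
    fun b => (∀ i : Fin l, m i.val * b i < q) ∧
      F ≤ ∏ i : Fin l, (q - m i.val + 1 - m i.val * b i)).image
    fun b i => m i.val * b i

private lemma ceil_le_iff {F c P : ℕ} (hc : 1 ≤ c) :
    (F + c - 1) / c ≤ P ↔ F ≤ P * c := by
  rw [Nat.div_le_iff_le_mul_add_pred hc, mul_comm P c]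
  generalize c * P = t
  omega

/-- `|DBset q m F l|` equals the cardinality of the simple filter set. -/
private lemma DBset_card_eq (q F l : ℕ) (hF : 1 ≤ F) (m : ℕ → ℕ)
    (hm : ∀ i, 1 ≤ m i ∧ m i ≤ q - 1) :
    (DBset q m F l).card =
    ((Fintype.piFinset fun _ : Fin l => Finset.range q).filter
      fun b => F ≤ ∏ i : Fin l, (q - m i.val + 1 - m i.val * b i)).card := by
  unfold DBset
  have hinj : Function.Injective (fun (b : Fin l → ℕ) (i : Fin l) => m i.val * b i) := by
    intro a b hab
    funext i
    have h1 := (hm i.val).1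
    have h2 : m i.val * a i = m i.val * b i := congrFun hab i
    exact Nat.eq_of_mul_eq_mul_left (by omega) h2
  rw [Finset.card_image_of_injective _ hinj]
  congr 1
  apply Finset.filter_congr
  intro b _
  constructor
  · exact fun h => h.2
  · intro h
    refine ⟨fun i => ?_, h⟩
    have hpos : 0 < q - m i.val + 1 - m i.val * b i := by
      by_contra hz
      push_neg at hz
      have h0 : q - m i.val + 1 - m i.val * b i = 0 := by omega
      have : ∏ j : Fin l, (q - m j.val + 1 - m j.val * b j) = 0 :=
        Finset.prod_eq_zero (Finset.mem_univ i) h0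
      omega
    have h1 := (hm i.val).1
    have h2 := (hm i.val).2
    omega

/-- splitting off the last coordinate -/
private lemma card_filter_succ (q : ℕ) (m : ℕ → ℕ) (G n : ℕ) :
    ((Fintype.piFinset fun _ : Fin (n+1) => Finset.range q).filter
      fun b => G ≤ ∏ i : Fin (n+1), (q - m i.val + 1 - m i.val * b i)).card =
    ∑ c ∈ Finset.range q,
      ((Fintype.piFinset fun _ : Fin n => Finset.range q).filter
        fun b => G ≤ (∏ i : Fin n, (q - m i.val + 1 - m i.val * b i))
          * (q - m n + 1 - m n * c)).card := by
  have hmap : ∀ b ∈ (Fintype.piFinset fun _ : Fin (n+1) => Finset.range q).filter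
      (fun b => G ≤ ∏ i : Fin (n+1), (q - m i.val + 1 - m i.val * b i)),
      b (Fin.last n) ∈ Finset.range q := by
    intro b hb
    simp only [Finset.mem_filter, Fintype.mem_piFinset] at hb
    exact hb.1 _
  rw [Finset.card_eq_sum_card_fiberwise hmap]
  refine Finset.sum_congr rfl fun c hc => ?_
  refine Finset.card_bij' (fun b _ => fun j : Fin n => b j.castSucc)
    (fun b _ => Fin.snoc b c) ?_ ?_ ?_ ?_
  · intro b hb
    simp only [Finset.mem_filter, Fintype.mem_piFinset] at hb ⊢
    obtain ⟨⟨hb1, hb2⟩, hb3⟩ := hb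
    refine ⟨fun j => hb1 _, ?_⟩
    rw [Fin.prod_univ_castSucc] at hb2
    simp only [Fin.coe_castSucc, Fin.val_last] at hb2
    rwa [hb3] at hb2
  · intro b hb
    simp only [Finset.mem_filter, Fintype.mem_piFinset, Finset.mem_range] at hb ⊢
    obtain ⟨hb1, hb2⟩ := hb
    refine ⟨⟨fun i => ?_, ?_⟩, ?_⟩
    · rcases Fin.eq_castSucc_or_eq_last i with ⟨j, rfl⟩ | rfl
      · simp only [Fin.snoc_castSucc]; exact hb1 j
      · simp only [Fin.snoc_last]; exact Finset.mem_range.mp hc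
    · rw [Fin.prod_univ_castSucc]
      simp only [Fin.snoc_castSucc, Fin.snoc_last, Fin.coe_castSucc, Fin.val_last]
      exact hb2
    · simp only [Fin.snoc_last]
  · intro b hb
    simp only [Finset.mem_filter] at hb
    funext i
    rcases Fin.eq_castSucc_or_eq_last i with ⟨j, rfl⟩ | rfl
    · simp only [Fin.snoc_castSucc]
    · simp only [Fin.snoc_last]; exact hb.2.symm
  · intro b hb
    funext j
    simp only [Fin.snoc_castSucc]

/-- Recurrence for `|D_B(F,l)|`:
`|D_B(F,1)| = max{0, ⌊(q_1 - F)/m_1⌋ + 1}` and for `l > 1`,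
`|D_B(F,l)| = ∑_{b=0}^{⌊(q_l - 1)/m_l⌋} |D_B(⌈F/(q_l - m_l b)⌉, l-1)|`. -/
theorem DB_card_recurrence (q F : ℕ) (hF : 1 ≤ F) (m : ℕ → ℕ)
    (hm : ∀ i, 1 ≤ m i ∧ m i ≤ q - 1) :
    ((DBset q m F 1).card =
      if F ≤ q - m 0 + 1 then (q - m 0 + 1 - F) / m 0 + 1 else 0) ∧
    ∀ l : ℕ, 1 < l →
      (DBset q m F l).card =
        ∑ b ∈ Finset.range ((q - m (l - 1)) / m (l - 1) + 1),
          (DBset q m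
            ((F + (q - m (l - 1) + 1 - m (l - 1) * b) - 1) /
              (q - m (l - 1) + 1 - m (l - 1) * b))
            (l - 1)).card := by
  have hm0 := hm 0
  have hq : 2 ≤ q := by omega
  constructor
  · -- base case l = 1
    rw [DBset_card_eq q F 1 hF m hm, card_filter_succ q m F 0]
    have hsum : ∀ c : ℕ,
        ((Fintype.piFinset fun _ : Fin 0 => Finset.range q).filter
          fun b => F ≤ (∏ i : Fin 0, (q - m i.val + 1 - m i.val * b i))
            * (q - m 0 + 1 - m 0 * c)).card
        = if F ≤ q - m 0 + 1 - m 0 * c then 1 else 0 := by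
      intro c
      simp only [Fin.prod_univ_zero, one_mul]
      split_ifs with h
      · rw [Finset.filter_true_of_mem fun _ _ => h]
        simp [Fintype.card_piFinset]
      · rw [Finset.filter_false_of_mem fun _ _ => h]
        simp
    simp only [hsum]
    rw [← Finset.card_filter]
    split_ifs with hFle
    · have hfil : (Finset.range q).filter (fun c => F ≤ q - m 0 + 1 - m 0 * c)
          = Finset.range ((q - m 0 + 1 - F) / m 0 + 1) := by
        ext c
        simp only [Finset.mem_filter, Finset.mem_range]
        have hle : c ≤ (q - m 0 + 1 - F) / m 0 ↔ c * m 0 ≤ q - m 0 + 1 - F :=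
          Nat.le_div_iff_mul_le (by omega)
        have hcm : c ≤ m 0 * c := Nat.le_mul_of_pos_left c (by omega)
        have hmc : c * m 0 = m 0 * c := mul_comm _ _
        rw [hmc] at hle
        constructor
        · intro ⟨h1, h2⟩
          have : m 0 * c ≤ q - m 0 + 1 - F := by omega
          omega
        · intro h
          have h' : c ≤ (q - m 0 + 1 - F) / m 0 := by omega
          have : m 0 * c ≤ q - m 0 + 1 - F := hle.mp h'
          constructor <;> omega
      rw [hfil, Finset.card_range]
    · rw [Finset.filter_false_of_mem, Finset.card_empty]
      intro c _
      omega
  · intro l hl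
    obtain ⟨n, rfl⟩ : ∃ n, l = n + 1 := ⟨l - 1, by omega⟩
    show _ = ∑ b ∈ Finset.range ((q - m n) / m n + 1),
      (DBset q m ((F + (q - m n + 1 - m n * b) - 1) / (q - m n + 1 - m n * b)) n).card
    have hmn := hm n
    rw [DBset_card_eq q F (n+1) hF m hm, card_filter_succ q m F n]
    have hd : (q - m n) / m n + 1 ≤ q := by
      have h1 : (q - m n) / m n ≤ q - m n := Nat.div_le_self _ _
      omega
    rw [← Finset.sum_subset (Finset.range_subset_range.mpr hd)]
    · refine Finset.sum_congr rfl fun c hc => ?_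
      rw [Finset.mem_range] at hc
      have hcle : m n * c ≤ q - m n := by
        rw [mul_comm]
        exact (Nat.le_div_iff_mul_le (by omega : 0 < m n)).mp (by omega)
      set c2 := q - m n + 1 - m n * c with hc2
      have hc2pos : 1 ≤ c2 := by omega
      have hF' : 1 ≤ (F + c2 - 1) / c2 := by
        rw [Nat.le_div_iff_mul_le (by omega : 0 < c2), one_mul]
        omega
      rw [DBset_card_eq q _ n hF' m hm]
      congr 1
      apply Finset.filter_congr
      intro b _
      exact (ceil_le_iff hc2pos).symm
    · intro c hc hc'
      rw [Finset.mem_range] at hc hc'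
      have hcgt : q - m n < m n * c := by
        rw [mul_comm]
        by_contra hle
        push_neg at hle
        have : c ≤ (q - m n) / m n :=
          (Nat.le_div_iff_mul_le (by omega : 0 < m n)).mpr hle
        omega
      have hz : q - m n + 1 - m n * c = 0 := by omega
      rw [Finset.filter_false_of_mem, Finset.card_empty]
      intro x _
      simp only [hz, mul_zero]
      omega
end
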